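/- Let ξ ∈ ℝ³ with ξ ≠ 0 and let x ∈ ℝ³ be such that x ≠ tξ for every t ≥ 0. Then the function t ↦ ⟨A(x − tξ), ξ⟩ is integrable on [0,∞), and the incoming phase Φ₋(x,ξ) := ∫₀^∞ ⟨A(x − tξ), ξ⟩ dt satisfies Φ₋(x,ξ) = ∫_{π−φ_ξ}^{φ_x} a(φ) dφ, where φ_ξ = arccos(ξ₃/|ξ|) (note that the colatitude of −ξ is π − φ_ξ). -/

import Mathlib

/-!
Off the `x₃`-axis the gradient of the colatitude is `e_φ / |y|`, so if `F` is a primitive of `a`,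
then along the line `y(t) = x - tξ` we have `d/dt F(φ_{y(t)}) = -⟨A(y(t)), ξ⟩`; on the axis both
sides vanish because `a` vanishes near `0` and `π`. Since `y(t)/t → -ξ`, the colatitude
`φ_{y(t)}` tends to `π - φ_ξ`, and the fundamental theorem of calculus on `[0, ∞)` gives the
formula. The integrand decays like `(1 + t)⁻²`: as `e_φ(y) ⊥ y`, we get
`(1 + t) ⟨e_φ(y), ξ⟩ = ⟨e_φ(y), x + ξ⟩`, while `|y(t)| ≥ ε (1 + t)`.
-/

open Real MeasureTheory Filter
open scoped RealInnerProductSpace Topology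

noncomputable section

/-- `ℝ³` as a Euclidean space. -/
abbrev E3 := EuclideanSpace ℝ (Fin 3)

/-- The colatitude `φ_x = arccos(x₃/|x|)` of a point of `ℝ³`. -/
def colat (x : E3) : ℝ := Real.arccos (x 2 / ‖x‖)

/-- The unit vector `e_{φ_x}` of spherical coordinates. -/
def ephi (x : E3) : E3 :=
  (1 / ‖x‖) • (WithLp.equiv 2 (Fin 3 → ℝ)).symm
    ![x 0 * x 2 / Real.sqrt ((x 0)^2 + (x 1)^2),
      x 1 * x 2 / Real.sqrt ((x 0)^2 + (x 1)^2),
      - Real.sqrt ((x 0)^2 + (x 1)^2)]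

/-- The magnetic potential `A(x) = (a(φ_x)/|x|) e_{φ_x}` (set to `0` on the `x₃`-axis). -/
def magA (a : ℝ → ℝ) (x : E3) : E3 :=
  if 0 < (x 0)^2 + (x 1)^2 then (a (colat x) / ‖x‖) • ephi x else 0

lemma inner_eq_coords (u v : E3) : ⟪u, v⟫ = u 0 * v 0 + u 1 * v 1 + u 2 * v 2 := by
  simp [PiLp.inner_apply, Fin.sum_univ_three, mul_comm]

lemma norm_sq_eq_coords (u : E3) : ‖u‖ ^ 2 = u 0 ^ 2 + u 1 ^ 2 + u 2 ^ 2 := by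
  rw [← real_inner_self_eq_norm_sq, inner_eq_coords]; ring

lemma ephi_apply (y : E3) (i : Fin 3) :
    ephi y i = ‖y‖⁻¹ * ![y 0 * y 2 / √(y 0 ^ 2 + y 1 ^ 2), y 1 * y 2 / √(y 0 ^ 2 + y 1 ^ 2),
      -√(y 0 ^ 2 + y 1 ^ 2)] i := by
  simp [ephi]

lemma ephi_eq_zero_of_not_pos {y : E3} (h : ¬ 0 < y 0 ^ 2 + y 1 ^ 2) : ephi y = 0 := by
  have h0 : y 0 ^ 2 + y 1 ^ 2 = 0 := le_antisymm (not_lt.mp h) (by positivity)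
  ext i
  fin_cases i <;> simp [ephi_apply, h0]

lemma inner_ephi (y v : E3) :
    ⟪ephi y, v⟫ = (y 2 * (y 0 * v 0 + y 1 * v 1) - (y 0 ^ 2 + y 1 ^ 2) * v 2) /
      (‖y‖ * √(y 0 ^ 2 + y 1 ^ 2)) := by
  by_cases h : 0 < y 0 ^ 2 + y 1 ^ 2
  · rw [inner_eq_coords]
    simp only [ephi_apply, Matrix.cons_val_zero, Matrix.cons_val_one, Matrix.cons_val_two,
      Matrix.head_cons, Matrix.tail_cons]
    have hs2 := Real.sq_sqrt h.le
    field_simp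
    rw [hs2]
    ring
  · have h0 : y 0 ^ 2 + y 1 ^ 2 = 0 := le_antisymm (not_lt.mp h) (by positivity)
    simp [ephi_eq_zero_of_not_pos h, h0]

lemma inner_ephi_self (y : E3) : ⟪ephi y, y⟫ = 0 := by
  rw [inner_ephi]; ring_nf

lemma norm_ephi_le_one (y : E3) : ‖ephi y‖ ≤ 1 := by
  by_cases h : 0 < y 0 ^ 2 + y 1 ^ 2
  · have hy : y ≠ 0 := by rintro rfl; simp at h
    have hr : ‖y‖ ≠ 0 := norm_ne_zero_iff.mpr hy
    refine (sq_le_one_iff₀ (norm_nonneg _)).mp (le_of_eq ?_)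
    rw [norm_sq_eq_coords]
    simp only [ephi_apply, Matrix.cons_val_zero, Matrix.cons_val_one, Matrix.cons_val_two,
      Matrix.head_cons, Matrix.tail_cons]
    have hs2 := Real.sq_sqrt h.le
    have hr2 := norm_sq_eq_coords y
    field_simp
    rw [show √(y 0 ^ 2 + y 1 ^ 2) ^ 4 = (√(y 0 ^ 2 + y 1 ^ 2) ^ 2) ^ 2 by ring, hs2, hr2]
    ring
  · simp [ephi_eq_zero_of_not_pos h]

lemma magA_eq_smul_ephi (a : ℝ → ℝ) (y : E3) : magA a y = (a (colat y) / ‖y‖) • ephi y := by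
  unfold magA
  split_ifs with h
  · rfl
  · rw [ephi_eq_zero_of_not_pos h, smul_zero]

lemma colat_mem_Icc (y : E3) : colat y ∈ Set.Icc 0 π :=
  ⟨arccos_nonneg _, arccos_le_pi _⟩

lemma colat_smul_of_pos {c : ℝ} (hc : 0 < c) (y : E3) : colat (c • y) = colat y := by
  simp only [colat, PiLp.smul_apply, smul_eq_mul, norm_smul, norm_of_nonneg hc.le]
  rw [mul_div_mul_left _ _ hc.ne']

lemma colat_neg (y : E3) : colat (-y) = π - colat y := by
  simp [colat, neg_div, arccos_neg]

lemma continuousAt_colat {y : E3} (hy : y ≠ 0) : ContinuousAt colat y := by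
  have hr : ‖y‖ ≠ 0 := norm_ne_zero_iff.mpr hy
  unfold colat
  fun_prop (disch := exact hr)

lemma colat_eq_zero_or_eq_pi {y : E3} (hy : y ≠ 0) (h : ¬ 0 < y 0 ^ 2 + y 1 ^ 2) :
    colat y = 0 ∨ colat y = π := by
  have h0 : y 0 ^ 2 + y 1 ^ 2 = 0 := le_antisymm (not_lt.mp h) (by positivity)
  have hr : ‖y‖ ≠ 0 := norm_ne_zero_iff.mpr hy
  have hsq : (y 2 / ‖y‖) ^ 2 = 1 := by
    rw [div_pow, div_eq_one_iff_eq (pow_ne_zero 2 hr), norm_sq_eq_coords]; linarith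
  rcases sq_eq_one_iff.mp hsq with h1 | h1
  · left; rw [colat, h1, arccos_one]
  · right; rw [colat, h1, arccos_neg_one]

lemma measurable_colat : Measurable colat := by
  unfold colat; fun_prop

lemma measurable_inner_ephi (v : E3) : Measurable fun y ↦ ⟪ephi y, v⟫ := by
  simp only [inner_ephi]; fun_prop

lemma HasDerivAt.colat {γ : ℝ → E3} {v : E3} {t : ℝ} (hγ : HasDerivAt γ v t)
    (h : 0 < γ t 0 ^ 2 + γ t 1 ^ 2) :
    HasDerivAt (fun s ↦ colat (γ s)) (⟪ephi (γ t), v⟫ / ‖γ t‖) t := by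
  set y := γ t with hy_def
  have hy : y ≠ 0 := by rintro h0; simp [h0] at h
  have hr : 0 < ‖y‖ := norm_pos_iff.mpr hy
  have hr2 := norm_sq_eq_coords y
  have hs2 := Real.sq_sqrt h.le
  have hcoord : ∀ i, HasDerivAt (fun s ↦ γ s i) (v i) t := fun i ↦
    (EuclideanSpace.proj i : E3 →L[ℝ] ℝ).hasFDerivAt.comp_hasDerivAt t hγ
  have hnorm : HasDerivAt (fun s ↦ ‖γ s‖) (⟪y, v⟫ / ‖y‖) t := by
    have := hγ.norm_sq.sqrt (by positivity)
    simp only [sqrt_sq (norm_nonneg _), ← hy_def] at this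
    convert this using 1
    field_simp
  have hquot := (hcoord 2).div hnorm hr.ne'
  rw [← hy_def] at hquot
  have hsq : 1 - (y 2 / ‖y‖) ^ 2 = (√(y 0 ^ 2 + y 1 ^ 2) / ‖y‖) ^ 2 := by
    field_simp; linear_combination hr2 - hs2
  have hlt : (y 2 / ‖y‖) ^ 2 < 1 := by
    have : 0 < (√(y 0 ^ 2 + y 1 ^ 2) / ‖y‖) ^ 2 := by positivity
    linarith
  have hne : y 2 / ‖y‖ ≠ -1 ∧ y 2 / ‖y‖ ≠ 1 := by
    constructor <;> rintro h1 <;> rw [h1] at hlt <;> norm_num at hlt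
  refine ((hasDerivAt_arccos hne.1 hne.2).comp t hquot).congr_deriv ?_
  rw [hsq, sqrt_sq (by positivity), inner_ephi, inner_eq_coords]
  field_simp
  linear_combination (-v 2) * hr2

lemma primitive_eventuallyEq_of_notMem_tsupport {a : ℝ → ℝ} (ha : Continuous a) (c : ℝ)
    {p : ℝ} (hp : p ∉ tsupport a) :
    (fun u ↦ ∫ φ in c..u, a φ) =ᶠ[𝓝 p] fun _ ↦ ∫ φ in c..p, a φ := by
  obtain ⟨ε, hε, hball⟩ :=
    Metric.eventually_nhds_iff_ball.mp (notMem_tsupport_iff_eventuallyEq.mp hp)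
  rw [Real.ball_eq_Ioo] at hball
  have hpε : p ∈ Set.Ioo (p - ε) (p + ε) := ⟨by linarith, by linarith⟩
  filter_upwards [Ioo_mem_nhds hpε.1 hpε.2] with u hu
  have hzero : ∫ φ in p..u, a φ = 0 := intervalIntegral.integral_zero_ae <| .of_forall
    fun φ hφ ↦ hball φ (Set.ordConnected_Ioo.uIcc_subset hpε hu (Set.uIoc_subset_uIcc hφ))
  rw [← sub_eq_zero, intervalIntegral.integral_interval_sub_left (ha.intervalIntegrable _ _)
    (ha.intervalIntegrable _ _), hzero]

lemma hasDerivAt_primitive_colat {a : ℝ → ℝ} (ha : Continuous a)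
    (hsupp : tsupport a ⊆ Set.Ioo 0 π) (c : ℝ) {γ : ℝ → E3} {v : E3} {t : ℝ}
    (hγ : HasDerivAt γ v t) (hγt : γ t ≠ 0) :
    HasDerivAt (fun s ↦ ∫ φ in c..colat (γ s), a φ) ⟪magA a (γ t), v⟫ t := by
  by_cases h : 0 < γ t 0 ^ 2 + γ t 1 ^ 2
  · have hF := intervalIntegral.integral_hasDerivAt_right (ha.intervalIntegrable c (colat (γ t)))
      (ha.stronglyMeasurableAtFilter _ _) ha.continuousAt
    refine (hF.comp t (hγ.colat h)).congr_deriv ?_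
    rw [magA_eq_smul_ephi, real_inner_smul_left]
    ring
  · have hp : colat (γ t) ∉ tsupport a := by
      intro hmem
      have := hsupp hmem
      rcases colat_eq_zero_or_eq_pi hγt h with h0 | h0 <;> rw [h0] at this
      exacts [this.1.false, this.2.false]
    have hconst := ((continuousAt_colat hγt).comp hγ.continuousAt).eventually
      (primitive_eventuallyEq_of_notMem_tsupport ha c hp)
    rw [magA, if_neg h, inner_zero_left]
    exact (hasDerivAt_const t _).congr_of_eventuallyEq hconst

/-- With `s = t / (1 + t) ∈ [0, 1)` one has `x - t • ξ = (1 + t) • ((1 - s) • x - s • ξ)`, and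
`(1 - s) • x - s • ξ` is bounded away from `0` on the compact interval `[0, 1]`. -/
lemma exists_pos_mul_one_add_le_norm_sub_smul {E : Type*} [NormedAddCommGroup E]
    [NormedSpace ℝ E] {x ξ : E} (hξ : ξ ≠ 0) (hx : ∀ t : ℝ, 0 ≤ t → x ≠ t • ξ) :
    ∃ ε > 0, ∀ t : ℝ, 0 ≤ t → ε * (1 + t) ≤ ‖x - t • ξ‖ := by
  set f : ℝ → ℝ := fun s ↦ ‖(1 - s) • x - s • ξ‖
  obtain ⟨s₀, hs₀, hmin⟩ := isCompact_Icc.exists_isMinOn (Set.nonempty_Icc.mpr zero_le_one)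
    (Continuous.continuousOn (by fun_prop) : ContinuousOn f (Set.Icc 0 1))
  have hpos : 0 < f s₀ := by
    rcases hs₀.2.lt_or_eq with hlt | rfl
    · refine norm_pos_iff.mpr fun h0 ↦ hx (s₀ / (1 - s₀)) (div_nonneg hs₀.1 (by linarith)) ?_
      have : x = (1 - s₀)⁻¹ • (s₀ • ξ) := by
        rw [← sub_eq_zero.mp h0, inv_smul_smul₀ (by linarith : 1 - s₀ ≠ 0)]
      rw [this, smul_smul, div_eq_inv_mul]
    · simpa [f] using hξ
  refine ⟨f s₀, hpos, fun t ht ↦ ?_⟩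
  have h1t : 0 < 1 + t := by linarith
  have hmem : t / (1 + t) ∈ Set.Icc (0 : ℝ) 1 :=
    ⟨by positivity, (div_le_one h1t).mpr (by linarith)⟩
  have hscale : x - t • ξ = (1 + t) • ((1 - t / (1 + t)) • x - (t / (1 + t)) • ξ) := by
    rw [smul_sub, smul_smul, smul_smul, mul_one_sub, mul_div_cancel₀ _ h1t.ne',
      add_sub_cancel_right, one_smul]
  calc f s₀ * (1 + t) ≤ f (t / (1 + t)) * (1 + t) :=
        mul_le_mul_of_nonneg_right (hmin hmem) h1t.le
    _ = ‖x - t • ξ‖ := by rw [hscale, norm_smul, norm_of_nonneg h1t.le, mul_comm]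

lemma abs_one_add_mul_inner_ephi_sub_smul_le (x ξ : E3) (t : ℝ) :
    |(1 + t) * ⟪ephi (x - t • ξ), ξ⟫| ≤ ‖x + ξ‖ := by
  have horth := inner_ephi_self (x - t • ξ)
  rw [inner_sub_right, real_inner_smul_right] at horth
  have h : (1 + t) * ⟪ephi (x - t • ξ), ξ⟫ = ⟪ephi (x - t • ξ), x + ξ⟫ := by
    rw [inner_add_right]; linarith
  rw [h]
  exact (abs_real_inner_le_norm _ _).trans
    (mul_le_of_le_one_left (norm_nonneg _) (norm_ephi_le_one _))

lemma integrableOn_inner_magA_sub_smul {a : ℝ → ℝ} (ha : Continuous a) {x ξ : E3}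
    (hξ : ξ ≠ 0) (hx : ∀ t : ℝ, 0 ≤ t → x ≠ t • ξ) :
    IntegrableOn (fun t : ℝ ↦ ⟪magA a (x - t • ξ), ξ⟫) (Set.Ici 0) := by
  obtain ⟨M, hM⟩ :=
    isCompact_Icc.exists_bound_of_continuousOn (ha.continuousOn (s := Set.Icc 0 π))
  obtain ⟨ε, hε, hεt⟩ := exists_pos_mul_one_add_le_norm_sub_smul hξ hx
  simp_rw [magA_eq_smul_ephi, real_inner_smul_left]
  have hdom : IntegrableOn (fun t : ℝ ↦ M * ‖x + ξ‖ / ε * (1 + ‖t‖) ^ (-2 : ℝ)) (Set.Ici 0) :=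
    ((integrable_one_add_norm (E := ℝ) (μ := volume) (by norm_num)).const_mul _).integrableOn
  refine hdom.mono' ?_ ?_
  · exact ((ha.measurable.comp measurable_colat).div measurable_norm
      |>.mul (measurable_inner_ephi ξ)).comp (by fun_prop) |>.aestronglyMeasurable
  filter_upwards [ae_restrict_mem measurableSet_Ici] with t ht
  have ht : (0 : ℝ) ≤ t := ht
  have h1t : 0 < 1 + t := by linarith
  have hr : ε * (1 + t) ≤ ‖x - t • ξ‖ := hεt t ht
  have ha' : |a (colat (x - t • ξ))| ≤ M := by simpa using hM _ (colat_mem_Icc _)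
  have hM0 : 0 ≤ M := (abs_nonneg _).trans ha'
  have hinner : |⟪ephi (x - t • ξ), ξ⟫| ≤ ‖x + ξ‖ / (1 + t) := by
    have := abs_one_add_mul_inner_ephi_sub_smul_le x ξ t
    rw [abs_mul, abs_of_pos h1t] at this
    rw [le_div_iff₀ h1t]; linarith
  rw [norm_of_nonneg ht, rpow_neg h1t.le, rpow_two, Real.norm_eq_abs, abs_mul, abs_div,
    abs_norm]
  calc |a (colat (x - t • ξ))| / ‖x - t • ξ‖ * |⟪ephi (x - t • ξ), ξ⟫|
      ≤ M / (ε * (1 + t)) * (‖x + ξ‖ / (1 + t)) :=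
        mul_le_mul (div_le_div₀ hM0 ha' (by positivity) hr) hinner
          (abs_nonneg _) (by positivity)
    _ = M * ‖x + ξ‖ / ε * ((1 + t) ^ 2)⁻¹ := by field_simp

lemma tendsto_colat_sub_smul (x : E3) {ξ : E3} (hξ : ξ ≠ 0) :
    Tendsto (fun t : ℝ ↦ colat (x - t • ξ)) atTop (𝓝 (π - colat ξ)) := by
  have hlim : Tendsto (fun t : ℝ ↦ t⁻¹ • x - ξ) atTop (𝓝 (-ξ)) := by
    simpa using ((tendsto_inv_atTop_zero (𝕜 := ℝ)).smul_const x).sub_const ξ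
  rw [← colat_neg]
  refine ((continuousAt_colat (neg_ne_zero.mpr hξ)).tendsto.comp hlim).congr' ?_
  filter_upwards [eventually_gt_atTop 0] with t ht
  rw [Function.comp_apply, ← colat_smul_of_pos ht, smul_sub, smul_inv_smul₀ ht.ne']

theorem incoming_phase_eq_general (a : ℝ → ℝ) (ha : ContDiff ℝ (⊤ : ℕ∞) a)
    (hsupp : tsupport a ⊆ Set.Ioo 0 Real.pi)
    (ξ x : E3) (hξ : ξ ≠ 0) (hx : ∀ t : ℝ, 0 ≤ t → x ≠ t • ξ) :
    IntegrableOn (fun t : ℝ => ⟪magA a (x - t • ξ), ξ⟫) (Set.Ici 0) ∧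
    (∫ t in Set.Ici (0:ℝ), ⟪magA a (x - t • ξ), ξ⟫) =
      ∫ φ in (Real.pi - colat ξ)..(colat x), a φ := by
  have hint := integrableOn_inner_magA_sub_smul ha.continuous hξ hx
  refine ⟨hint, ?_⟩
  set G : ℝ → ℝ := fun t ↦ ∫ φ in (π - colat ξ)..colat (x - t • ξ), a φ
  have hG : ∀ t : ℝ, 0 ≤ t → HasDerivAt G (-⟪magA a (x - t • ξ), ξ⟫) t := fun t ht ↦ by
    have hline : HasDerivAt (fun s : ℝ ↦ x - s • ξ) (-ξ) t := by
      simpa using ((hasDerivAt_id t).smul_const ξ).const_sub x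
    simpa [inner_neg_right] using
      hasDerivAt_primitive_colat ha.continuous hsupp _ hline (sub_ne_zero.mpr (hx t ht))
  have hGlim : Tendsto G atTop (𝓝 0) := by
    have := ((intervalIntegral.continuous_primitive (μ := volume) ha.continuous.intervalIntegrable
      (π - colat ξ)).tendsto _).comp (tendsto_colat_sub_smul x hξ)
    rwa [intervalIntegral.integral_same] at this
  have hFTC := integral_Ioi_of_hasDerivAt_of_tendsto (hG 0 le_rfl).continuousAt.continuousWithinAt
    (fun t ht ↦ hG t (le_of_lt ht)) (hint.mono_set Set.Ioi_subset_Ici_self).neg hGlim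
  rw [integral_neg] at hFTC
  rw [integral_Ici_eq_integral_Ioi, neg_eq_iff_eq_neg.mp hFTC]
  simp [G]

/-- For `ξ ≠ 0` and `x` not on the outgoing ray `{tξ : t ≥ 0}`, the function
`t ↦ ⟨A(x − tξ), ξ⟫` is integrable on `[0,∞)` and the incoming phase
`Φ₋(x,ξ) = ∫₀^∞ ⟨A(x−tξ), ξ⟩ dt` equals `∫_{π−φ_ξ}^{φ_x} a(φ) dφ` (note that `π − φ_ξ` is
the colatitude of `−ξ`). -/
theorem incoming_phase_eq (a : ℝ → ℝ) (ha : ContDiff ℝ (⊤ : ℕ∞) a)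
    (hpos : ∀ t, 0 ≤ a t) (hcs : HasCompactSupport a)
    (hsupp : tsupport a ⊆ Set.Ioo 0 Real.pi)
    (ξ x : E3) (hξ : ξ ≠ 0) (hx : ∀ t : ℝ, 0 ≤ t → x ≠ t • ξ) :
    IntegrableOn (fun t : ℝ => ⟪magA a (x - t • ξ), ξ⟫) (Set.Ici 0) ∧
    (∫ t in Set.Ici (0:ℝ), ⟪magA a (x - t • ξ), ξ⟫) =
      ∫ φ in (Real.pi - colat ξ)..(colat x), a φ :=
  incoming_phase_eq_general a ha hsupp ξ x hξ hx
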